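/- arXiv:2006.14070 — 2 statements merged into one kernel-verified Lean document; each statement's English description precedes it below -/
import Mathlib

section
/- For every n ≥ 2, the number of standard puzzles of shape 2×n with support {A, P} = {(1,2,3,4), (3,1,4,2)} equals 2(n−1)² − (n−1) + 1. -/
/-- The rank (1-based) of entry `i` among the four entries of `q`. -/
def puzzleRank {N : ℕ} (q : Fin 4 → Fin N) (i : Fin 4) : ℕ :=
  (Finset.univ.filter (fun k => q k ≤ q i)).card

/-- The pattern (order-isomorphism type) of the `j`-th piece of a 2×n array `f`,
read bottom-left, bottom-right, top-right, top-left. Row `0` is the bottom row. -/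
def piece {n : ℕ} (f : Fin 2 × Fin n → Fin (2 * n)) (j : ℕ) (hj : j + 1 < n) :
    ℕ × ℕ × ℕ × ℕ :=
  let q : Fin 4 → Fin (2 * n) :=
    ![f (0, ⟨j, Nat.lt_of_succ_lt hj⟩), f (0, ⟨j + 1, hj⟩),
      f (1, ⟨j + 1, hj⟩), f (1, ⟨j, Nat.lt_of_succ_lt hj⟩)]
  (puzzleRank q 0, puzzleRank q 1, puzzleRank q 2, puzzleRank q 3)

/-- The number of standard puzzles of shape 2×n all of whose pieces lie in `P`. -/
noncomputable def puzzleCount (n : ℕ) (P : Set (ℕ × ℕ × ℕ × ℕ)) : ℕ :=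
  Nat.card {f : (Fin 2 × Fin n) ≃ Fin (2 * n) //
    ∀ j (hj : j + 1 < n), piece f j hj ∈ P}

/-!
In an `{A, P}`-puzzle a piece is `A` exactly when its left column increases from bottom to top,
and both patterns make the right column increase; so only the first piece can be `P`. Read the
cells along a `U`: the bottom row from left to right, then the top row from right to left. When
all pieces are `A` the values increase along the whole `U`, which forces the puzzle. When the
first piece is `P`, with `x < y` at the top and bottom of column `0`, the values increase along
the rest of the `U`, which therefore carries the other `2n - 2` values in order; the piece forces
`0 < x` and `y < 2n - 1`, and every such pair occurs. Hence there are `1 + C(2n - 2, 2)` puzzles.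
-/

section Rank

variable {N : ℕ} {q : Fin 4 → Fin N}

lemma puzzleRank_mono {i j : Fin 4} (h : q i ≤ q j) : puzzleRank q i ≤ puzzleRank q j :=
  Finset.card_le_card fun k hk => by
    simp only [Finset.mem_filter, Finset.mem_univ, true_and] at hk ⊢
    exact hk.trans h

lemma lt_of_puzzleRank_lt {i j : Fin 4} (h : puzzleRank q i < puzzleRank q j) : q i < q j :=
  lt_of_not_ge fun hle => (puzzleRank_mono hle).not_gt h

lemma puzzleRank_comp_eq_iff_strictMono (σ : Fin 4 → Fin 4) :
    (∀ i, puzzleRank q (σ i) = i + 1) ↔ StrictMono (q ∘ σ) := by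
  refine ⟨fun h i j hij => lt_of_puzzleRank_lt (i := σ i) (j := σ j) ?_, fun h i => ?_⟩
  · rw [h, h]
    exact Nat.add_lt_add_right hij 1
  · have hσ : Function.Injective σ := h.injective.of_comp
    have hfilter : Finset.univ.filter (fun k => q k ≤ q (σ i)) = (Finset.Iic i).image σ := by
      ext k
      obtain ⟨m, rfl⟩ := Finite.surjective_of_injective hσ k
      simpa [hσ.eq_iff] using h.le_iff_le
    rw [puzzleRank, hfilter, Finset.card_image_of_injective _ hσ, Fin.card_Iic]

lemma rankPattern_eq_iff_A :
    (puzzleRank q 0, puzzleRank q 1, puzzleRank q 2, puzzleRank q 3) = (1, 2, 3, 4) ↔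
      q 0 < q 1 ∧ q 1 < q 2 ∧ q 2 < q 3 := by
  have := puzzleRank_comp_eq_iff_strictMono (q := q) id
  simp only [Fin.forall_fin_succ, Fin.strictMono_iff_lt_succ] at this
  simpa [Prod.ext_iff] using this

lemma rankPattern_eq_iff_P :
    (puzzleRank q 0, puzzleRank q 1, puzzleRank q 2, puzzleRank q 3) = (3, 1, 4, 2) ↔
      q 1 < q 3 ∧ q 3 < q 0 ∧ q 0 < q 2 := by
  have := puzzleRank_comp_eq_iff_strictMono (q := q) ![1, 3, 0, 2]
  simp only [Fin.forall_fin_succ, Fin.strictMono_iff_lt_succ] at this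
  simpa [Prod.ext_iff, and_comm, and_left_comm, and_assoc] using this

end Rank

section Pieces

variable {β : Type*} [LinearOrder β] {n : ℕ}

def PieceA (f : Fin 2 × Fin n → β) (j j' : Fin n) : Prop :=
  f (0, j) < f (0, j') ∧ f (0, j') < f (1, j') ∧ f (1, j') < f (1, j)

def PieceP (f : Fin 2 × Fin n → β) (j j' : Fin n) : Prop :=
  f (0, j') < f (1, j) ∧ f (1, j) < f (0, j) ∧ f (0, j) < f (1, j')

def IsAPSupported (f : Fin 2 × Fin n → β) : Prop :=
  ∀ j j' : Fin n, j.val + 1 = j' → PieceA f j j' ∨ PieceP f j j'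

lemma piece_mem_AP_iff (f : Fin 2 × Fin n → Fin (2 * n)) (j : ℕ) (hj : j + 1 < n) :
    piece f j hj ∈ ({(1, 2, 3, 4), (3, 1, 4, 2)} : Set (ℕ × ℕ × ℕ × ℕ)) ↔
      PieceA f ⟨j, by omega⟩ ⟨j + 1, hj⟩ ∨ PieceP f ⟨j, by omega⟩ ⟨j + 1, hj⟩ := by
  rw [Set.mem_insert_iff, Set.mem_singleton_iff, piece, rankPattern_eq_iff_A,
    rankPattern_eq_iff_P]
  rfl

lemma forall_piece_mem_AP_iff (f : Fin 2 × Fin n → Fin (2 * n)) :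
    (∀ j (hj : j + 1 < n), piece f j hj ∈ ({(1, 2, 3, 4), (3, 1, 4, 2)} : Set (ℕ × ℕ × ℕ × ℕ)))
      ↔ IsAPSupported f := by
  refine ⟨fun h ⟨j, _⟩ ⟨j', hj'⟩ hjj' => ?_, fun h j hj => (piece_mem_AP_iff f j hj).2 ?_⟩
  · obtain rfl : j + 1 = j' := hjj'
    exact (piece_mem_AP_iff f j hj').1 (h j hj')
  · exact h _ _ rfl

variable {f : Fin 2 × Fin n → β}

lemma IsAPSupported.pieceA_of_lt (hf : IsAPSupported f) {j j' : Fin n} (hjj' : j.val + 1 = j')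
    (h : f (0, j) < f (1, j)) : PieceA f j j' :=
  (hf j j' hjj').resolve_right fun hP => hP.2.1.not_gt h

lemma IsAPSupported.bot_lt_top (hf : IsAPSupported f) {j' : Fin n} (hj' : j'.val ≠ 0) :
    f (0, j') < f (1, j') := by
  obtain hA | hP := hf ⟨j' - 1, by omega⟩ j' (by simp only; omega)
  · exact hA.2.1
  · exact hP.1.trans (hP.2.1.trans hP.2.2)

end Pieces

section UOrder

variable {n : ℕ}

def uOrder (n : ℕ) : Fin (2 * n) ≃ Fin 2 × Fin n where
  toFun k := if h : k.val < n then (0, ⟨k, h⟩) else (1, ⟨2 * n - 1 - k, by omega⟩)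
  invFun c := if c.1 = 0 then ⟨c.2, by omega⟩ else ⟨2 * n - 1 - c.2, by omega⟩
  left_inv k := by
    by_cases h : k.val < n
    · simp [h]
    · ext
      simp only [h, ↓reduceDIte, Fin.isValue, one_ne_zero, ↓reduceIte]
      omega
  right_inv := by
    rintro ⟨i, j⟩
    fin_cases i
    · simp
    · have : ¬ 2 * n - 1 - j.val < n := by omega
      ext <;> simp only [Fin.mk_one, Fin.isValue, one_ne_zero, ↓reduceIte, this, ↓reduceDIte,
        Fin.coe_ofNat_eq_mod, Nat.mod_succ]
      omega

lemma uOrder_apply_of_lt {k : Fin (2 * n)} (h : k.val < n) : uOrder n k = (0, ⟨k, h⟩) :=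
  dif_pos h

lemma uOrder_apply_of_le {k : Fin (2 * n)} (h : n ≤ k.val) :
    uOrder n k = (1, ⟨2 * n - 1 - k, by omega⟩) :=
  dif_neg (by omega)

@[simp] lemma uOrder_symm_apply_bot (j : Fin n) : ((uOrder n).symm (0, j)).val = j := rfl

@[simp] lemma uOrder_symm_apply_top (j : Fin n) : ((uOrder n).symm (1, j)).val = 2 * n - 1 - j :=
  rfl

def chainCell (n s : ℕ) (k : Fin (2 * n - 2 * s)) : Fin 2 × Fin n :=
  uOrder n ⟨k + s, by omega⟩

lemma mem_range_chainCell {s : ℕ} {c : Fin 2 × Fin n} (h : s ≤ c.2) :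
    c ∈ Set.range (chainCell n s) := by
  have hc : s ≤ ((uOrder n).symm c).val ∧ ((uOrder n).symm c).val < 2 * n - s := by
    obtain ⟨i, j⟩ := c
    fin_cases i <;>
      simp only [Fin.zero_eta, Fin.mk_one, Fin.isValue, uOrder_symm_apply_bot,
        uOrder_symm_apply_top] at h ⊢ <;> omega
  refine ⟨⟨(uOrder n).symm c - s, by omega⟩, ?_⟩
  simp only [chainCell, Nat.sub_add_cancel hc.1, Fin.eta, Equiv.apply_symm_apply]

end UOrder

lemma Fin.strictMono_of_lt_of_val_add_one_eq {α : Type*} [Preorder α] {M : ℕ} {g : Fin M → α}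
    (h : ∀ k k' : Fin M, k.val + 1 = k' → g k < g k') : StrictMono g := by
  cases M with
  | zero => exact fun k => k.elim0
  | succ M => exact Fin.strictMono_iff_lt_succ.2 fun k => h _ _ rfl

lemma Equiv.ext_of_strictMono_comp {α X β : Type*} [LinearOrder α] [WellFoundedLT α] [Preorder β]
    {f g : X ≃ β} {L : α → X} (hf : StrictMono (f ∘ L)) (hg : StrictMono (g ∘ L))
    (h : Set.EqOn f g (Set.range L)ᶜ) : f = g := by
  -- on the range of `L`, both are increasing enumerations of the same set
  have hrange : Set.range (f ∘ L) = Set.range (g ∘ L) := by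
    rw [Set.range_comp, Set.range_comp, ← compl_compl (Set.range L),
      Set.image_compl_eq f.bijective, Set.image_compl_eq g.bijective, Set.image_congr h]
  have hL : f ∘ L = g ∘ L := (hf.range_inj hg).1 hrange
  refine Equiv.ext fun x => ?_
  by_cases hx : x ∈ Set.range L
  · obtain ⟨a, rfl⟩ := hx
    exact congrFun hL a
  · exact h hx

section Chain

variable {β : Type*} [LinearOrder β] {n s : ℕ} {f : Fin 2 × Fin n → β}

lemma IsAPSupported.lt_uOrder_of_val_add_one_eq (hf : IsAPSupported f)
    (hs : ∀ j : Fin n, s ≤ j → f (0, j) < f (1, j)) {k k' : Fin (2 * n)}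
    (hkk' : k.val + 1 = k') (hsk : s ≤ k) (hk's : k' + s < 2 * n) :
    f (uOrder n k) < f (uOrder n k') := by
  rcases lt_trichotomy k'.val n with hk' | hk' | hk'
  · rw [uOrder_apply_of_lt (by omega : k.val < n), uOrder_apply_of_lt hk']
    exact (hf.pieceA_of_lt (j' := ⟨k', hk'⟩) hkk' (hs ⟨k, by omega⟩ hsk)).1
  · rw [uOrder_apply_of_lt (by omega : k.val < n), uOrder_apply_of_le hk'.ge]
    convert hs ⟨k, by omega⟩ hsk using 4
    omega
  · rw [uOrder_apply_of_le (by omega : n ≤ k.val), uOrder_apply_of_le hk'.le]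
    exact (hf.pieceA_of_lt (j := ⟨2 * n - 1 - k', by omega⟩) (j' := ⟨2 * n - 1 - k, by omega⟩)
      (by simp only; omega) (hs _ (by simp only; omega))).2.2

lemma IsAPSupported.strictMono_comp_chainCell (hf : IsAPSupported f)
    (hs : ∀ j : Fin n, s ≤ j → f (0, j) < f (1, j)) : StrictMono (f ∘ chainCell n s) :=
  Fin.strictMono_of_lt_of_val_add_one_eq fun k k' hkk' =>
    hf.lt_uOrder_of_val_add_one_eq hs (by simp only; omega) (by simp only; omega)
      (by simp only; omega)

theorem IsAPSupported.equiv_eq {f g : (Fin 2 × Fin n) ≃ β} (hf : IsAPSupported f)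
    (hg : IsAPSupported g) (hfs : ∀ j : Fin n, s ≤ j → f (0, j) < f (1, j))
    (hgs : ∀ j : Fin n, s ≤ j → g (0, j) < g (1, j))
    (h : ∀ c : Fin 2 × Fin n, c.2 < s → f c = g c) : f = g :=
  Equiv.ext_of_strictMono_comp (hf.strictMono_comp_chainCell hfs)
    (hg.strictMono_comp_chainCell hgs) fun c hc =>
      h c (not_le.1 fun hsc => hc (mem_range_chainCell hsc))

end Chain

section Puzzles

variable {n : ℕ}

def puzzleA (n : ℕ) : (Fin 2 × Fin n) ≃ Fin (2 * n) := (uOrder n).symm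

lemma isAPSupported_puzzleA : IsAPSupported (puzzleA n) := fun j j' hjj' => by
  left
  simp only [PieceA, puzzleA, Fin.lt_def, uOrder_symm_apply_bot, uOrder_symm_apply_top]
  omega

lemma puzzleA_bot_lt_top (j : Fin n) : puzzleA n (0, j) < puzzleA n (1, j) := by
  simp only [puzzleA, Fin.lt_def, uOrder_symm_apply_bot, uOrder_symm_apply_top]
  omega

lemma card_compl_pair {x y : Fin (2 * n)} (hxy : x ≠ y) :
    ({x, y}ᶜ : Finset (Fin (2 * n))).card = 2 * n - 2 := by
  rw [Finset.card_compl, Finset.card_pair hxy, Fintype.card_fin]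

lemma uOrder_symm_mem_Ioo {c : Fin 2 × Fin n} (hc : c.2.val ≠ 0) :
    0 < ((uOrder n).symm c).val ∧ ((uOrder n).symm c).val < 2 * n - 1 := by
  obtain ⟨i, j⟩ := c
  fin_cases i <;>
    simp only [Fin.zero_eta, Fin.mk_one, Fin.isValue, uOrder_symm_apply_bot,
      uOrder_symm_apply_top] at hc ⊢ <;> omega

def puzzlePFun {x y : Fin (2 * n)} (hxy : x ≠ y) (c : Fin 2 × Fin n) : Fin (2 * n) :=
  if hc : c.2.val = 0 then (if c.1 = 0 then y else x)
  else ({x, y}ᶜ : Finset _).orderEmbOfFin (card_compl_pair hxy)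
    ⟨(uOrder n).symm c - 1, by have := uOrder_symm_mem_Ioo hc; omega⟩

lemma puzzlePFun_injective {x y : Fin (2 * n)} (hxy : x ≠ y) :
    Function.Injective (puzzlePFun hxy) := by
  intro c c' h
  have hmem := Finset.orderEmbOfFin_mem ({x, y}ᶜ : Finset _) (card_compl_pair hxy)
  simp only [Finset.mem_compl, Finset.mem_insert, Finset.mem_singleton, not_or] at hmem
  unfold puzzlePFun at h
  split_ifs at h with hc hi hi' hi' hc' hi hi
  -- the values off column `0` avoid `x` and `y`
  all_goals first
    | exact absurd h hxy | exact absurd h.symm hxy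
    | exact absurd h.symm (hmem _).1 | exact absurd h.symm (hmem _).2
    | exact absurd h (hmem _).1 | exact absurd h (hmem _).2
    | skip
  · exact Prod.ext (hi.trans hi'.symm) (Fin.ext (by omega))
  · exact Prod.ext (Fin.ext (by omega)) (Fin.ext (by omega))
  · have := Fin.mk.inj_iff.1 ((Finset.orderEmbOfFin _ _).injective h)
    have := uOrder_symm_mem_Ioo hc
    have := uOrder_symm_mem_Ioo hi
    exact (uOrder n).symm.injective (Fin.ext (by omega))

noncomputable def puzzleP {x y : Fin (2 * n)} (hxy : x ≠ y) : (Fin 2 × Fin n) ≃ Fin (2 * n) :=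
  Equiv.ofBijective (puzzlePFun hxy) ((Fintype.bijective_iff_injective_and_card _).2
    ⟨puzzlePFun_injective hxy, by simp⟩)

section
variable {x y : Fin (2 * n)} (hxy : x ≠ y)

lemma puzzleP_apply_zero_zero [NeZero n] : puzzleP hxy (0, 0) = y := by
  simp [puzzleP, puzzlePFun]

lemma puzzleP_apply_one_zero [NeZero n] : puzzleP hxy (1, 0) = x := by
  simp [puzzleP, puzzlePFun]

lemma puzzleP_apply_of_ne {c : Fin 2 × Fin n} (hc : c.2.val ≠ 0) :
    puzzleP hxy c = ({x, y}ᶜ : Finset _).orderEmbOfFin (card_compl_pair hxy)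
      ⟨(uOrder n).symm c - 1, by have := uOrder_symm_mem_Ioo hc; omega⟩ :=
  dif_neg hc

lemma puzzleP_lt_puzzleP_iff {c c' : Fin 2 × Fin n} (hc : c.2.val ≠ 0) (hc' : c'.2.val ≠ 0) :
    puzzleP hxy c < puzzleP hxy c' ↔ (uOrder n).symm c < (uOrder n).symm c' := by
  have := uOrder_symm_mem_Ioo hc
  have := uOrder_symm_mem_Ioo hc'
  rw [puzzleP_apply_of_ne hxy hc, puzzleP_apply_of_ne hxy hc', OrderEmbedding.lt_iff_lt,
    Fin.mk_lt_mk, Fin.lt_def]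
  omega

end

section
variable {x y : Fin (2 * n)} (hxy : x < y) {j' : Fin n}

lemma puzzleP_apply_zero_lt_of_val_eq_one (hj' : j'.val = 1) (hx : 0 < x.val) :
    puzzleP hxy.ne (0, j') < x := by
  have hk : 0 < 2 * n - 2 := by omega
  have hmem : (⟨0, by omega⟩ : Fin (2 * n)) ∈ ({x, y}ᶜ : Finset _) := by
    simp only [Finset.mem_compl, Finset.mem_insert, Finset.mem_singleton, Fin.ext_iff]
    omega
  calc puzzleP hxy.ne (0, j')
      = ({x, y}ᶜ : Finset _).orderEmbOfFin (card_compl_pair hxy.ne) ⟨0, hk⟩ := by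
        rw [puzzleP_apply_of_ne _ (c := (0, j')) (show j'.val ≠ 0 by omega)]
        simp [hj']
    _ = ({x, y}ᶜ : Finset _).min' ⟨_, hmem⟩ := Finset.orderEmbOfFin_zero _ hk
    _ ≤ ⟨0, by omega⟩ := Finset.min'_le _ _ hmem
    _ < x := hx

lemma lt_puzzleP_apply_one_of_val_eq_one (hj' : j'.val = 1) (hy : y.val < 2 * n - 1) :
    y < puzzleP hxy.ne (1, j') := by
  have hk : 0 < 2 * n - 2 := by omega
  have hmem : (⟨2 * n - 1, by omega⟩ : Fin (2 * n)) ∈ ({x, y}ᶜ : Finset _) := by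
    simp only [Finset.mem_compl, Finset.mem_insert, Finset.mem_singleton, Fin.ext_iff]
    omega
  calc y < ⟨2 * n - 1, by omega⟩ := hy
    _ ≤ ({x, y}ᶜ : Finset _).max' ⟨_, hmem⟩ := Finset.le_max' _ _ hmem
    _ = ({x, y}ᶜ : Finset _).orderEmbOfFin (card_compl_pair hxy.ne) ⟨2 * n - 2 - 1, by omega⟩ :=
        (Finset.orderEmbOfFin_last _ hk).symm
    _ = puzzleP hxy.ne (1, j') := by
        rw [puzzleP_apply_of_ne _ (c := (1, j')) (show j'.val ≠ 0 by omega)]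
        simp only [uOrder_symm_apply_top, hj']
        congr 2

end

lemma isAPSupported_puzzleP {x y : Fin (2 * n)} (hxy : x < y) (hx : 0 < x.val)
    (hy : y.val < 2 * n - 1) : IsAPSupported (puzzleP hxy.ne) := by
  intro j j' hjj'
  by_cases hj : j.val = 0
  · have : NeZero n := ⟨by omega⟩
    obtain rfl : j = 0 := Fin.ext hj
    have hj' : j'.val = 1 := by simpa using hjj'.symm
    refine Or.inr ⟨puzzleP_apply_zero_lt_of_val_eq_one hxy hj' hx, ?_,
      lt_puzzleP_apply_one_of_val_eq_one hxy hj' hy⟩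
    rwa [puzzleP_apply_one_zero, puzzleP_apply_zero_zero]
  · have hj' : j'.val ≠ 0 := by omega
    left
    simp only [PieceA, puzzleP_lt_puzzleP_iff hxy.ne, ne_eq, hj, hj', not_false_eq_true,
      Fin.lt_def, uOrder_symm_apply_bot, uOrder_symm_apply_top]
    omega

end Puzzles

section Classification

variable {n : ℕ} {f : (Fin 2 × Fin n) ≃ Fin (2 * n)}

lemma IsAPSupported.eq_puzzleA [NeZero n] (hf : IsAPSupported f) (h : f (0, 0) < f (1, 0)) :
    f = puzzleA n :=
  hf.equiv_eq (s := 0) isAPSupported_puzzleA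
    (fun j _ => if hj : j.val = 0 then (Fin.ext hj : j = 0) ▸ h else hf.bot_lt_top hj)
    (fun j _ => puzzleA_bot_lt_top j) (fun _ hc => absurd hc (Nat.not_lt_zero _))

lemma IsAPSupported.pieceP_zero [NeZero n] (hf : IsAPSupported f) {j' : Fin n}
    (hj' : j'.val = 1) (h : f (1, 0) < f (0, 0)) : PieceP f 0 j' :=
  (hf 0 j' (by simp [hj'])).resolve_left fun hA => h.not_gt (hA.1.trans (hA.2.1.trans hA.2.2))

lemma IsAPSupported.zero_lt_and_lt_of_lt [NeZero n] (hn : 1 < n) (hf : IsAPSupported f)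
    (h : f (1, 0) < f (0, 0)) : 0 < (f (1, 0)).val ∧ (f (0, 0)).val < 2 * n - 1 := by
  obtain ⟨hx, -, hy⟩ := hf.pieceP_zero (j' := ⟨1, hn⟩) rfl h
  have := (f (1, ⟨1, hn⟩)).isLt
  exact ⟨(Nat.zero_le _).trans_lt hx, by have := Fin.lt_def.1 hy; omega⟩

lemma IsAPSupported.eq_puzzleP [NeZero n] (hn : 1 < n) (hf : IsAPSupported f)
    (h : f (1, 0) < f (0, 0)) : f = puzzleP h.ne := by
  obtain ⟨hx, hy⟩ := hf.zero_lt_and_lt_of_lt hn h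
  have hP := isAPSupported_puzzleP h hx hy
  refine hf.equiv_eq (s := 1) hP (fun j hj => hf.bot_lt_top (by omega))
    (fun j hj => hP.bot_lt_top (by omega)) fun c hc => ?_
  obtain ⟨i, j⟩ := c
  obtain rfl : j = 0 := Fin.ext (by simpa using hc)
  fin_cases i
  · exact (puzzleP_apply_zero_zero h.ne).symm
  · exact (puzzleP_apply_one_zero h.ne).symm

end Classification

section Count

variable {n : ℕ}

/-- The possible top and bottom entries `(x, y)` of column `0` in a puzzle whose first piece
is `P`. -/
def pParams (n : ℕ) : Finset (ℕ × ℕ) :=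
  {p ∈ Finset.Ioo 0 (2 * n - 1) ×ˢ Finset.Ioo 0 (2 * n - 1) | p.1 < p.2}

lemma mem_pParams {p : ℕ × ℕ} : p ∈ pParams n ↔ 0 < p.1 ∧ p.1 < p.2 ∧ p.2 < 2 * n - 1 := by
  simp only [pParams, Finset.mem_filter, Finset.mem_product, Finset.mem_Ioo]
  omega

lemma card_pParams : (pParams n).card = (2 * n - 2).choose 2 := by
  rw [pParams, Finset.card_product_filter_lt, Nat.card_Ioo]
  rfl

noncomputable def apPuzzle (n : ℕ) : Option (pParams n) → (Fin 2 × Fin n) ≃ Fin (2 * n)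
  | none => puzzleA n
  | some p =>
    have hp := mem_pParams.1 p.2
    puzzleP (x := ⟨p.1.1, by omega⟩) (y := ⟨p.1.2, by omega⟩) (Fin.ne_of_lt hp.2.1)

lemma apPuzzle_injective [NeZero n] : Function.Injective (apPuzzle n) := by
  have hA := puzzleA_bot_lt_top (n := n) 0
  rintro (_ | ⟨p, hp⟩) (_ | ⟨p', hp'⟩) h
  · rfl
  · have := (mem_pParams.1 hp').2.1
    change puzzleA n = puzzleP _ at h
    rw [h, puzzleP_apply_zero_zero, puzzleP_apply_one_zero] at hA
    exact absurd hA (not_lt.2 (Fin.mk_le_mk.2 this.le))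
  · have := (mem_pParams.1 hp).2.1
    change puzzleP _ = puzzleA n at h
    rw [← h, puzzleP_apply_zero_zero, puzzleP_apply_one_zero] at hA
    exact absurd hA (not_lt.2 (Fin.mk_le_mk.2 this.le))
  · change puzzleP _ = puzzleP _ at h
    have hx := congrArg (fun f => (f (1, 0)).val) h
    have hy := congrArg (fun f => (f (0, 0)).val) h
    simp only [puzzleP_apply_zero_zero, puzzleP_apply_one_zero] at hx hy
    exact congrArg some (Subtype.ext (Prod.ext hx hy))

theorem isAPSupported_iff_mem_range_apPuzzle (hn : 1 < n) {f : (Fin 2 × Fin n) ≃ Fin (2 * n)} :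
    IsAPSupported f ↔ f ∈ Set.range (apPuzzle n) := by
  have : NeZero n := ⟨by omega⟩
  refine ⟨fun hf => ?_, ?_⟩
  · rcases lt_or_gt_of_ne (f.injective.ne (by simp : ((0 : Fin 2), (0 : Fin n)) ≠ (1, 0))) with
      h | h
    · exact ⟨none, (hf.eq_puzzleA h).symm⟩
    · obtain ⟨hx, hy⟩ := hf.zero_lt_and_lt_of_lt hn h
      have hp : ((f (1, 0)).val, (f (0, 0)).val) ∈ pParams n := mem_pParams.2 ⟨hx, h, hy⟩
      exact ⟨some ⟨_, hp⟩, (hf.eq_puzzleP hn h).symm⟩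
  · rintro ⟨_ | p, rfl⟩
    · exact isAPSupported_puzzleA
    · have hp := mem_pParams.1 p.2
      exact isAPSupported_puzzleP (Fin.mk_lt_mk.2 hp.2.1) hp.1 hp.2.2

theorem puzzleCount_AP (hn : 1 < n) :
    puzzleCount n {(1, 2, 3, 4), (3, 1, 4, 2)} = (2 * n - 2).choose 2 + 1 := by
  have : NeZero n := ⟨by omega⟩
  have hset : {f : (Fin 2 × Fin n) ≃ Fin (2 * n) |
      ∀ j (hj : j + 1 < n), piece f j hj ∈ ({(1, 2, 3, 4), (3, 1, 4, 2)} : Set _)} =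
      Set.range (apPuzzle n) := by
    ext f
    rw [Set.mem_ofPred_eq, forall_piece_mem_AP_iff, isAPSupported_iff_mem_range_apPuzzle hn]
  rw [puzzleCount, ← Set.coe_ofPred, hset, Nat.card_range_of_injective apPuzzle_injective,
    Finite.card_option, Nat.card_eq_fintype_card, Fintype.card_coe, card_pParams]

end Count

theorem stmt10 (n : ℕ) (hn : 2 ≤ n) :
    puzzleCount n {(1, 2, 3, 4), (3, 1, 4, 2)} = 2 * (n - 1) ^ 2 - (n - 1) + 1 := by
  rw [puzzleCount_AP hn]
  obtain ⟨m, rfl⟩ : ∃ m, n = m + 1 := ⟨n - 1, by omega⟩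
  rw [show 2 * (m + 1) - 2 = 2 * m by omega, Nat.add_sub_cancel]
  have hsub : 2 * m ^ 2 - m = m * (2 * m - 1) := by
    rw [Nat.mul_sub_one, sq, mul_left_comm]
  rw [hsub, Nat.choose_two_right, mul_assoc, Nat.mul_div_cancel_left _ two_pos]
end

section
/- For every n ≥ 2, the number of standard puzzles of shape 2×n with support {A, B, D} = {(1,2,3,4), (1,2,4,3), (1,3,4,2)} equals the odd double factorial (2n−1)!! = 1·3·5···(2n−1). -/
open Equiv Function
open scoped Nat

section puzzleRank

variable {N : ℕ} {q : Fin 4 → Fin N} {i j : Fin 4}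

lemma one_le_puzzleRank : 1 ≤ puzzleRank q i :=
  Finset.card_pos.mpr ⟨i, by simp⟩

lemma puzzleRank_le_four : puzzleRank q i ≤ 4 :=
  (Finset.card_filter_le _ _).trans (by simp)

lemma puzzleRank_le_puzzleRank (h : q i ≤ q j) : puzzleRank q i ≤ puzzleRank q j :=
  Finset.card_le_card <| Finset.monotone_filter_right _ fun _ _ hk => hk.trans h

lemma puzzleRank_lt_puzzleRank (h : q i < q j) : puzzleRank q i < puzzleRank q j := by
  refine Finset.card_lt_card <| (Finset.ssubset_iff_of_subset ?_).2 ⟨j, by simp, by simpa⟩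
  exact Finset.monotone_filter_right _ fun _ _ hk => hk.trans h.le

lemma puzzleRank_lt_puzzleRank_iff : puzzleRank q i < puzzleRank q j ↔ q i < q j :=
  ⟨fun h => lt_of_not_ge fun h' => (puzzleRank_le_puzzleRank h').not_gt h,
    puzzleRank_lt_puzzleRank⟩

lemma eq_of_puzzleRank_eq (h : puzzleRank q i = puzzleRank q j) : q i = q j :=
  le_antisymm (not_lt.1 fun h' => (puzzleRank_lt_puzzleRank h').ne' h)
    (not_lt.1 fun h' => (puzzleRank_lt_puzzleRank h').ne h)

/-- The patterns `A`, `B`, `D` of the paper. -/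
def patternsABD : Set (ℕ × ℕ × ℕ × ℕ) := {(1, 2, 3, 4), (1, 2, 4, 3), (1, 3, 4, 2)}

lemma rankPattern_mem_patternsABD_iff (h31 : q 3 ≠ q 1) (h32 : q 3 ≠ q 2) :
    (puzzleRank q 0, puzzleRank q 1, puzzleRank q 2, puzzleRank q 3) ∈ patternsABD ↔
      q 0 < q 1 ∧ q 0 < q 3 ∧ q 1 < q 2 := by
  have r31 := mt eq_of_puzzleRank_eq h31
  have r32 := mt eq_of_puzzleRank_eq h32
  have bounds : ∀ i, 1 ≤ puzzleRank q i ∧ puzzleRank q i ≤ 4 :=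
    fun _ => ⟨one_le_puzzleRank, puzzleRank_le_four⟩
  have := bounds 0; have := bounds 1; have := bounds 2; have := bounds 3
  simp only [← puzzleRank_lt_puzzleRank_iff, patternsABD, Set.mem_insert_iff,
    Set.mem_singleton_iff, Prod.mk.injEq]
  -- given `r₀ < r₁ < r₂` and `r₀ < r₃`, the three possible positions of `r₃` give `D`, `B`, `A`
  omega

end puzzleRank

variable {n : ℕ}

lemma piece_mem_patternsABD_iff (f : Fin 2 × Fin n ≃ Fin (2 * n)) (j : ℕ) (hj : j + 1 < n) :
    piece f j hj ∈ patternsABD ↔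
      f (0, ⟨j, Nat.lt_of_succ_lt hj⟩) < f (0, ⟨j + 1, hj⟩) ∧
        f (0, ⟨j, Nat.lt_of_succ_lt hj⟩) < f (1, ⟨j, Nat.lt_of_succ_lt hj⟩) ∧
        f (0, ⟨j + 1, hj⟩) < f (1, ⟨j + 1, hj⟩) :=
  rankPattern_mem_patternsABD_iff (f.injective.ne (by simp)) (f.injective.ne (by simp))

section NormalForm

variable {β : Type*} [LinearOrder β]

def IsNormalForm (f : Fin 2 × Fin n ≃ β) : Prop :=
  (∀ k, f (0, k) < f (1, k)) ∧ StrictMono fun k => f (0, k)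

lemma forall_piece_mem_patternsABD_iff_isNormalForm (hn : 2 ≤ n)
    (f : Fin 2 × Fin n ≃ Fin (2 * n)) :
    (∀ j (hj : j + 1 < n), piece f j hj ∈ patternsABD) ↔ IsNormalForm f := by
  obtain ⟨m, rfl⟩ : ∃ m, n = m + 1 := ⟨n - 1, by omega⟩
  simp only [piece_mem_patternsABD_iff]
  constructor
  · intro h
    refine ⟨fun k => ?_, Fin.strictMono_iff_lt_succ.2 fun i => (h i (by omega)).1⟩
    by_cases hk : (k : ℕ) + 1 < m + 1
    · exact (h k hk).2.1
    · -- the last column is only seen as the right column of the last piece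
      have hj : m - 1 + 1 < m + 1 := by omega
      obtain rfl : k = ⟨m - 1 + 1, hj⟩ := Fin.ext (by simp; omega)
      exact (h _ hj).2.2
  · rintro ⟨hcol, hrow⟩ j hj
    exact ⟨hrow (Fin.mk_lt_mk.2 j.lt_succ_self), hcol _, hcol _⟩

def columnPerm {ι κ : Type*} (s : κ → Perm ι) (σ : Perm κ) : Perm (ι × κ) where
  toFun p := (s p.2 p.1, σ p.2)
  invFun p := ((s (σ.symm p.2)).symm p.1, σ.symm p.2)
  left_inv p := by simp
  right_inv p := by simp

@[simp]
lemma columnPerm_apply {ι κ : Type*} (s : κ → Perm ι) (σ : Perm κ) (i : ι) (k : κ) :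
    columnPerm s σ (i, k) = (s k i, σ k) := rfl

@[simp]
lemma columnPerm_symm_apply {ι κ : Type*} (s : κ → Perm ι) (σ : Perm κ) (i : ι) (k : κ) :
    (columnPerm s σ).symm (i, k) = ((s (σ.symm k)).symm i, σ.symm k) := rfl

lemma Equiv.Perm.fin_two_cases (t : Perm (Fin 2)) :
    t 0 = 0 ∧ t 1 = 1 ∨ t 0 = 1 ∧ t 1 = 0 := by
  revert t; decide

lemma IsNormalForm.min_eq {f : Fin 2 × Fin n ≃ β} (hf : IsNormalForm f) (t : Perm (Fin 2))
    (k : Fin n) : min (f (t 0, k)) (f (t 1, k)) = f (0, k) := by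
  rcases t.fin_two_cases with ⟨h0, h1⟩ | ⟨h0, h1⟩ <;> simp [h0, h1, (hf.1 k).le]

lemma IsNormalForm.max_eq {f : Fin 2 × Fin n ≃ β} (hf : IsNormalForm f) (t : Perm (Fin 2))
    (k : Fin n) : max (f (t 0, k)) (f (t 1, k)) = f (1, k) := by
  rcases t.fin_two_cases with ⟨h0, h1⟩ | ⟨h0, h1⟩ <;> simp [h0, h1, (hf.1 k).le]

def columnPermTrans (p : ((Fin n → Perm (Fin 2)) × Perm (Fin n)) ×
    {f : Fin 2 × Fin n ≃ β // IsNormalForm f}) : Fin 2 × Fin n ≃ β :=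
  (columnPerm p.1.1 p.1.2).trans p.2.1

lemma columnPermTrans_injective : Injective (columnPermTrans (n := n) (β := β)) := by
  rintro ⟨⟨s, σ⟩, f, hf⟩ ⟨⟨s', σ'⟩, f', hf'⟩ h
  have hg : ∀ i k, f (s k i, σ k) = f' (s' k i, σ' k) := fun i k => Equiv.congr_fun h (i, k)
  -- column minima and maxima do not see the flips `s`
  have hbot : ∀ k, f (0, σ k) = f' (0, σ' k) := fun k => by
    rw [← hf.min_eq (s k), ← hf'.min_eq (s' k), hg, hg]
  have htop : ∀ k, f (1, σ k) = f' (1, σ' k) := fun k => by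
    rw [← hf.max_eq (s k), ← hf'.max_eq (s' k), hg, hg]
  set B := fun k => f (0, k)
  have hrow : B = fun k => f' (0, k) := by
    have hB : (B ∘ σ) ∘ σ.symm = B := by ext; simp
    have hB' : (B ∘ σ) ∘ σ'.symm = fun k => f' (0, k) := by ext; simp [B, hbot]
    have := Tuple.unique_monotone (f := B ∘ σ) (σ := σ.symm) (τ := σ'.symm)
      (by rw [hB]; exact hf.2.monotone) (by rw [hB']; exact hf'.2.monotone)
    rwa [hB, hB'] at this
  obtain rfl : σ = σ' := Equiv.ext fun k => hf.2.injective <| by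
    simpa [B] using (hbot k).trans (congrFun hrow (σ' k)).symm
  obtain rfl : f = f' := Equiv.ext fun ⟨i, k⟩ => by
    fin_cases i
    · exact congrFun hrow k
    · simpa using htop (σ.symm k)
  obtain rfl : s = s' := funext fun k => Equiv.ext fun i => by
    simpa using f.injective (hg i k)
  rfl

lemma columnPermTrans_surjective : Surjective (columnPermTrans (n := n) (β := β)) := by
  intro g
  -- sort each column, then sort the columns by their minima
  set o : Fin n → Perm (Fin 2) := fun k => Tuple.sort fun i => g (i, k)
  set m : Fin n → β := fun k => g (o k 0, k)
  set π := Tuple.sort m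
  set f := (columnPerm (fun k => (o k).symm) π.symm).symm.trans g
  have hf : ∀ i k, f (i, k) = g (o (π k) i, π k) := fun _ _ => by simp [f]
  have hcol : ∀ k, StrictMono fun i => g (o k i, k) := fun k =>
    (Tuple.monotone_sort _).strictMono_of_injective <|
      (g.injective.comp fun _ _ h => (Prod.ext_iff.1 h).1).comp (o k).injective
  have hm : Injective m := fun _ _ h => (Prod.ext_iff.1 (g.injective h)).2
  refine ⟨⟨⟨fun k => (o k).symm, π.symm⟩, f, fun k => ?_, ?_⟩, ?_⟩
  · simpa only [hf] using hcol (π k) Fin.zero_lt_one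
  · simp only [hf]
    exact (Tuple.monotone_sort m).strictMono_of_injective (hm.comp π.injective)
  · ext; simp [columnPermTrans, f]

end NormalForm

lemma Nat.factorial_two_mul_eq_mul_doubleFactorial (n : ℕ) : (2 * n)! = 2 ^ n * n ! * (2 * n - 1)‼ := by
  cases n with
  | zero => rfl
  | succ n =>
    rw [show 2 * (n + 1) - 1 = 2 * n + 1 by omega, ← Nat.doubleFactorial_two_mul,
      show 2 * (n + 1) = 2 * n + 1 + 1 by omega, Nat.factorial_eq_mul_doubleFactorial]

lemma card_isNormalForm (n : ℕ) :
    Nat.card {f : Fin 2 × Fin n ≃ Fin (2 * n) // IsNormalForm f} = (2 * n - 1)‼ := by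
  have h := Nat.card_eq_of_bijective _
    ⟨columnPermTrans_injective (n := n) (β := Fin (2 * n)), columnPermTrans_surjective⟩
  rw [Nat.card_prod, Nat.card_prod, Nat.card_fun, Nat.card_perm, Nat.card_perm,
    Nat.card_eq_fintype_card (α := _ ≃ _), Fintype.card_equiv finProdFinEquiv] at h
  simp only [Nat.card_fin, Nat.factorial_two, Fintype.card_prod, Fintype.card_fin] at h
  rw [Nat.factorial_two_mul_eq_mul_doubleFactorial] at h
  exact Nat.eq_of_mul_eq_mul_left (by positivity : 0 < 2 ^ n * n !) h

theorem stmt11 (n : ℕ) (hn : 2 ≤ n) :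
    puzzleCount n {(1, 2, 3, 4), (1, 2, 4, 3), (1, 3, 4, 2)} = Nat.doubleFactorial (2 * n - 1) := by
  rw [puzzleCount, ← card_isNormalForm n]
  exact Nat.card_congr <| Equiv.subtypeEquivRight
    (forall_piece_mem_patternsABD_iff_isNormalForm hn)
end
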